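/- Let τ = 𝟙₂/2 be the maximally mixed state on ℂ², and for each n ≥ 2 define ξ_n ∈ D((ℂ²)^{⊗n}) by: ξ_n = binom(n, n/2)^{−1} Σ_{x∈{0,1}^n, ‖x‖₁ = n/2} |x⟩⟨x| if n is even, and ξ_n = ξ_{n−1} ⊗ τ if n is odd. Then for every even n, (1/n)‖ξ_n − τ^{⊗n}‖_{W1} ≤ √(ln(n+1)/(2n)), and the sequence (ξ_n)_n is a Wasserstein almost i.i.d. source along τ: lim_{n→∞} (1/n)‖ξ_n − τ^{⊗n}‖_{W1} = 0. -/

import Mathlib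

open scoped BigOperators ComplexOrder
open Filter Matrix

noncomputable section

namespace AlmostIID

/-- The trace norm `‖A‖₁ = Tr √(A†A)` of a square complex matrix. -/
def traceNorm {m : Type*} [Fintype m] [DecidableEq m] (A : Matrix m m ℂ) : ℝ :=
  ((((Matrix.posSemidef_conjTranspose_mul_self A).isHermitian.eigenvectorUnitary : Matrix m m ℂ) *
      Matrix.diagonal ((fun x : ℝ => (x : ℂ)) ∘ (Real.sqrt ∘ (Matrix.posSemidef_conjTranspose_mul_self A).isHermitian.eigenvalues)) *
      (star (Matrix.posSemidef_conjTranspose_mul_self A).isHermitian.eigenvectorUnitary : Matrix m m ℂ)).trace).re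

/-- A density matrix (state): positive semidefinite with unit trace. -/
def IsState {m : Type*} [Fintype m] (M : Matrix m m ℂ) : Prop :=
  M.PosSemidef ∧ M.trace = 1

/-- The marginal (reduced density matrix) of an `n`-partite operator on the
coordinates in `I`, i.e. the partial trace over the complement of `I`. -/
def marginal {κ : Type*} [Fintype κ] {n : ℕ}
    (M : Matrix (Fin n → κ) (Fin n → κ) ℂ) (I : Finset (Fin n)) :
    Matrix ({i : Fin n // i ∈ I} → κ) ({i : Fin n // i ∈ I} → κ) ℂ :=
  fun a b => ∑ f : {i : Fin n // i ∉ I} → κ,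
    M (fun i => if h : i ∈ I then a ⟨i, h⟩ else f ⟨i, h⟩)
      (fun i => if h : i ∈ I then b ⟨i, h⟩ else f ⟨i, h⟩)

/-- The single-site reduced density matrix on the `i`-th tensor factor. -/
def siteMarginal {κ : Type*} [Fintype κ] {n : ℕ}
    (M : Matrix (Fin n → κ) (Fin n → κ) ℂ) (i : Fin n) : Matrix κ κ ℂ :=
  fun a b => ∑ f : {j : Fin n // j ≠ i} → κ,
    M (fun j => if h : j = i then a else f ⟨j, h⟩)
      (fun j => if h : j = i then b else f ⟨j, h⟩)

/-- The i.i.d. product state `ρ^{⊗ι}` on the tensor factors indexed by `ι`. -/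
def iidOn {κ : Type*} (ι : Type*) [Fintype ι] (ρ : Matrix κ κ ℂ) :
    Matrix (ι → κ) (ι → κ) ℂ :=
  fun a b => ∏ i, ρ (a i) (b i)

/-- The product state `φ 0 ⊗ φ 1 ⊗ ⋯`. -/
def prodState {κ : Type*} {ι : Type*} [Fintype ι] (φ : ι → Matrix κ κ ℂ) :
    Matrix (ι → κ) (ι → κ) ℂ :=
  fun a b => ∏ i, φ i (a i) (b i)

/-- The quantum Wasserstein norm of order 1 of a difference of states:
the minimum of `Σ cᵢ` over decompositions `X = Σ cᵢ (τ⁽ⁱ⁾ − η⁽ⁱ⁾)` with `cᵢ ≥ 0`,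
`τ⁽ⁱ⁾, η⁽ⁱ⁾` states with equal partial traces over the `i`-th factor. -/
def W1 {κ : Type*} [Fintype κ] [DecidableEq κ] {n : ℕ}
    (X : Matrix (Fin n → κ) (Fin n → κ) ℂ) : ℝ :=
  sInf { w : ℝ |
    ∃ (c : Fin n → ℝ) (τ η : Fin n → Matrix (Fin n → κ) (Fin n → κ) ℂ),
      (∀ i, 0 ≤ c i) ∧ (∀ i, IsState (τ i)) ∧ (∀ i, IsState (η i)) ∧
      (∀ i, marginal (τ i) ({i}ᶜ : Finset (Fin n)) = marginal (η i) ({i}ᶜ : Finset (Fin n))) ∧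
      X = ∑ i, c i • (τ i - η i) ∧ w = ∑ i, c i }

/-- The local variation norm. -/
def LV {κ : Type*} [Fintype κ] [DecidableEq κ] {n : ℕ}
    (X : Matrix (Fin n → κ) (Fin n → κ) ℂ) : ℝ :=
  (1/2) * ∑ k ∈ Finset.Icc 1 n, ((2:ℝ)^k)⁻¹ *
    (((n.choose k : ℝ))⁻¹ *
      ∑ I ∈ Finset.powersetCard k (Finset.univ : Finset (Fin n)),
        traceNorm (marginal X I))


/-- For even `n`: the uniform mixture of computational-basis states of Hamming
weight `n/2`, as a diagonal state on `(ℂ²)^{⊗n}`. -/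
def xiEven (n : ℕ) : Matrix (Fin n → Fin 2) (Fin n → Fin 2) ℂ :=
  Matrix.diagonal fun x =>
    if 2 * (∑ i, (x i : ℕ)) = n then ((n.choose (n / 2) : ℂ))⁻¹ else 0

/-- The state `ξₙ`: for even `n`, the uniform mixture of basis states of Hamming weight
`n/2`; for odd `n`, `ξ_{n−1} ⊗ τ` where `τ = 𝟙₂/2`. -/
def xi : (n : ℕ) → Matrix (Fin n → Fin 2) (Fin n → Fin 2) ℂ
  | 0 => 1
  | (m + 1) =>
    if Even (m + 1) then xiEven (m + 1)
    else fun a b =>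
      xiEven m (fun i => a i.castSucc) (fun i => b i.castSucc) *
        ((2 : ℂ))⁻¹ * (if a (Fin.last m) = b (Fin.last m) then 1 else 0)


open Finset

lemma fin2_val_ite (v : Fin 2) : ((v : ℕ)) = if v = 1 then 1 else 0 := by
  have h2 := v.isLt
  by_cases h : v = 1
  · simp [h]
  · have : (v : ℕ) ≠ 1 := fun hc => h (Fin.ext hc)
    simp [h]; omega

-- sum over bit strings as sum over weights
lemma sum_weight {ι : Type*} [Fintype ι] [DecidableEq ι] (f : ℕ → ℝ) :
    ∑ x : ι → Fin 2, f (∑ i, ((x i : ℕ))) =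
      ∑ k ∈ Finset.range (Fintype.card ι + 1), ((Fintype.card ι).choose k : ℝ) * f k := by
  let e : (ι → Fin 2) ≃ Finset ι :=
    { toFun := fun x => Finset.univ.filter (fun i => x i = 1)
      invFun := fun s => fun i => if i ∈ s then 1 else 0
      left_inv := by
        intro x; funext i
        by_cases h : x i = 1
        · simp [h]
        · have h2 := (x i).isLt
          have : (x i : ℕ) ≠ 1 := fun hc => h (Fin.ext hc)
          simp [h]
          exact (Fin.ext (by omega)).symm
      right_inv := by
        intro s; ext i; simp }
  have hwt : ∀ x : ι → Fin 2, (∑ i, ((x i : ℕ))) = (e x).card := by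
    intro x
    rw [Finset.sum_congr rfl (fun i _ => fin2_val_ite (x i)), Finset.sum_boole]
    simp only [Nat.cast_id]
    rfl
  calc ∑ x : ι → Fin 2, f (∑ i, ((x i : ℕ)))
      = ∑ x : ι → Fin 2, f ((e x).card) := Finset.sum_congr rfl (fun x _ => by rw [hwt])
    _ = ∑ s : Finset ι, f s.card := Equiv.sum_comp e (fun s => f s.card)
    _ = ∑ s ∈ (Finset.univ : Finset ι).powerset, f s.card := by rw [Finset.powerset_univ]
    _ = ∑ k ∈ Finset.range (Fintype.card ι + 1), ((Fintype.card ι).choose k : ℝ) * f k := by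
        rw [Finset.sum_powerset, Finset.card_univ]
        refine Finset.sum_congr rfl (fun k _ => ?_)
        have : ∑ s ∈ Finset.powersetCard k (Finset.univ : Finset ι), f s.card
            = ∑ _s ∈ Finset.powersetCard k (Finset.univ : Finset ι), f k :=
          Finset.sum_congr rfl (fun s hs => by rw [Finset.mem_powersetCard_univ.mp hs])
        rw [this, Finset.sum_const, Finset.card_powersetCard, Finset.card_univ, nsmul_eq_mul]

lemma marginal_diagonal_compl_single {n : ℕ} (d : (Fin n → Fin 2) → ℂ) (i : Fin n)
    (a b : {j : Fin n // j ∈ ({i}ᶜ : Finset (Fin n))} → Fin 2) :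
    marginal (Matrix.diagonal d) ({i}ᶜ : Finset (Fin n)) a b =
      if a = b then
        ∑ v : Fin 2, d (Function.update
          (fun j => if h : j ∈ ({i}ᶜ : Finset (Fin n)) then a ⟨j, h⟩ else 0) i v)
      else 0 := by
  classical
  have hmemI : ∀ j, j ∈ ({i}ᶜ : Finset (Fin n)) ↔ j ≠ i := by intro j; simp
  haveI : Unique {j : Fin n // j ∉ ({i}ᶜ : Finset (Fin n))} :=
    { default := ⟨i, by simp⟩
      uniq := by
        rintro ⟨j, hj⟩
        have : j = i := by simpa [hmemI] using hj
        exact Subtype.ext this }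
  by_cases hab : a = b
  · subst hab
    rw [if_pos rfl]
    unfold marginal
    set z : Fin n → Fin 2 :=
      fun j => if h : j ∈ ({i}ᶜ : Finset (Fin n)) then a ⟨j, h⟩ else 0 with hz
    have key : ∀ f : {j : Fin n // j ∉ ({i}ᶜ : Finset (Fin n))} → Fin 2,
        (fun j => if h : j ∈ ({i}ᶜ : Finset (Fin n)) then a ⟨j, h⟩ else f ⟨j, h⟩)
          = Function.update z i (f default) := by
      intro f; funext j
      by_cases h : j ∈ ({i}ᶜ : Finset (Fin n))
      · have hji : j ≠ i := (hmemI j).mp h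
        rw [Function.update_of_ne hji]
        show _ = if h : j ∈ ({i}ᶜ : Finset (Fin n)) then a ⟨j, h⟩ else 0
        rw [dif_pos h, dif_pos h]
      · have hji : j = i := by simpa [hmemI] using h
        subst hji
        rw [dif_neg h, Function.update_self]
        exact congrArg f (Subsingleton.elim _ _)
    calc ∑ f : {j : Fin n // j ∉ ({i}ᶜ : Finset (Fin n))} → Fin 2,
          Matrix.diagonal d
            (fun j => if h : j ∈ ({i}ᶜ : Finset (Fin n)) then a ⟨j, h⟩ else f ⟨j, h⟩)
            (fun j => if h : j ∈ ({i}ᶜ : Finset (Fin n)) then a ⟨j, h⟩ else f ⟨j, h⟩)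
        = ∑ f : {j : Fin n // j ∉ ({i}ᶜ : Finset (Fin n))} → Fin 2,
            d (Function.update z i (f default)) := by
          refine Finset.sum_congr rfl (fun f _ => ?_)
          rw [key f, Matrix.diagonal_apply_eq]
      _ = ∑ v : Fin 2, d (Function.update z i v) :=
          Equiv.sum_comp (Equiv.funUnique {j : Fin n // j ∉ ({i}ᶜ : Finset (Fin n))} (Fin 2))
            (fun v => d (Function.update z i v))
  · rw [if_neg hab]
    unfold marginal
    refine Finset.sum_eq_zero (fun f _ => ?_)
    refine Matrix.diagonal_apply_ne d ?_
    obtain ⟨j₀, hj₀⟩ := Function.ne_iff.mp hab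
    intro hcon
    apply hj₀
    have h2 := congrFun hcon j₀.val
    rw [dif_pos j₀.2, dif_pos j₀.2] at h2
    exact h2


lemma W1_nonneg {κ : Type*} [Fintype κ] [DecidableEq κ] {n : ℕ}
    (X : Matrix (Fin n → κ) (Fin n → κ) ℂ) : 0 ≤ W1 X := by
  apply Real.sInf_nonneg
  rintro w ⟨c, τ, η, hc, -, -, -, -, rfl⟩
  exact Finset.sum_nonneg fun i _ => hc i

theorem W1_le_of_scalarData {n : ℕ} (δ : (Fin n → Fin 2) → ℝ)
    (c : Fin n → ℝ) (T H : Fin n → (Fin n → Fin 2) → ℝ)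
    (hc : ∀ i, 0 ≤ c i)
    (hT0 : ∀ i x, 0 ≤ T i x) (hH0 : ∀ i x, 0 ≤ H i x)
    (hT1 : ∀ i, ∑ x, T i x = 1) (hH1 : ∀ i, ∑ x, H i x = 1)
    (hmarg : ∀ i z, T i (Function.update z i 0) + T i (Function.update z i 1)
        = H i (Function.update z i 0) + H i (Function.update z i 1))
    (hdec : ∀ x, δ x = ∑ i, c i * (T i x - H i x)) :
    W1 (Matrix.diagonal (fun x => (δ x : ℂ))) ≤ ∑ i, c i := by
  classical
  set τ : Fin n → Matrix (Fin n → Fin 2) (Fin n → Fin 2) ℂ :=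
    fun i => Matrix.diagonal (fun x => (T i x : ℂ)) with hτ
  set η : Fin n → Matrix (Fin n → Fin 2) (Fin n → Fin 2) ℂ :=
    fun i => Matrix.diagonal (fun x => (H i x : ℂ)) with hη
  have hbdd : BddBelow { w : ℝ |
      ∃ (c : Fin n → ℝ) (τ η : Fin n → Matrix (Fin n → Fin 2) (Fin n → Fin 2) ℂ),
        (∀ i, 0 ≤ c i) ∧ (∀ i, IsState (τ i)) ∧ (∀ i, IsState (η i)) ∧
        (∀ i, marginal (τ i) ({i}ᶜ : Finset (Fin n)) = marginal (η i) ({i}ᶜ : Finset (Fin n))) ∧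
        Matrix.diagonal (fun x => (δ x : ℂ)) = ∑ i, c i • (τ i - η i) ∧ w = ∑ i, c i } := by
    refine ⟨0, ?_⟩
    rintro w ⟨c, τ, η, hc, -, -, -, -, rfl⟩
    exact Finset.sum_nonneg fun i _ => hc i
  refine csInf_le hbdd ?_
  refine ⟨c, τ, η, hc, ?_, ?_, ?_, ?_, rfl⟩
  · intro i
    exact ⟨Matrix.posSemidef_diagonal_iff.mpr (fun x => Complex.zero_le_real.mpr (hT0 i x)),
      by rw [Matrix.trace_diagonal]; exact_mod_cast hT1 i⟩
  · intro i
    exact ⟨Matrix.posSemidef_diagonal_iff.mpr (fun x => Complex.zero_le_real.mpr (hH0 i x)),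
      by rw [Matrix.trace_diagonal]; exact_mod_cast hH1 i⟩
  · intro i
    ext a b
    rw [hτ, hη, marginal_diagonal_compl_single, marginal_diagonal_compl_single]
    by_cases hab : a = b
    · rw [if_pos hab, if_pos hab, Fin.sum_univ_two, Fin.sum_univ_two]
      exact_mod_cast hmarg i _
    · rw [if_neg hab, if_neg hab]
  · ext a b
    rw [Matrix.sum_apply]
    by_cases hab : a = b
    · subst hab
      simp only [hτ, hη, Matrix.smul_apply, Matrix.sub_apply, Matrix.diagonal_apply_eq]
      have h1 : ((δ a : ℝ) : ℂ) = ((∑ i, c i * (T i a - H i a) : ℝ) : ℂ) := by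
        exact_mod_cast congrArg Complex.ofReal (hdec a)
      rw [h1]
      push_cast
      refine Finset.sum_congr rfl (fun i _ => ?_)
      rw [Complex.real_smul]
    · simp only [hτ, hη, Matrix.smul_apply, Matrix.sub_apply,
        Matrix.diagonal_apply_ne _ hab]
      simp


lemma sum_range_choose_real (n : ℕ) :
    ∑ j ∈ range (n + 1), ((n.choose j : ℝ)) = 2 ^ n := by
  rw [← Nat.cast_sum]
  rw [Nat.sum_range_choose]
  push_cast; ring

lemma moment1 (p : ℕ) :
    ∑ j ∈ range (p + 2), (j : ℝ) * ((p + 1).choose j : ℝ) = (p + 1) * 2 ^ p := by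
  rw [Finset.sum_range_succ']
  have h : ∀ j : ℕ, (((j + 1 : ℕ)) : ℝ) * ((p + 1).choose (j + 1) : ℝ)
      = ((p : ℝ) + 1) * (p.choose j : ℝ) := by
    intro j
    have hc := congrArg (Nat.cast (R := ℝ)) (Nat.add_one_mul_choose_eq p j)
    push_cast at hc
    push_cast
    linarith
  rw [Finset.sum_congr rfl (fun j _ => h j), ← Finset.mul_sum, sum_range_choose_real]
  push_cast; ring

lemma moment2 (p : ℕ) :
    ∑ j ∈ range (p + 3), (j : ℝ) * ((j : ℝ) - 1) * ((p + 2).choose j : ℝ)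
      = (p + 2) * (p + 1) * 2 ^ p := by
  rw [Finset.sum_range_succ']
  have h : ∀ j : ℕ, (((j + 1 : ℕ)) : ℝ) * ((((j + 1 : ℕ)) : ℝ) - 1) * ((p + 2).choose (j + 1) : ℝ)
      = ((p : ℝ) + 2) * ((j : ℝ) * ((p + 1).choose j : ℝ)) := by
    intro j
    have hc := congrArg (Nat.cast (R := ℝ)) (Nat.add_one_mul_choose_eq (p + 1) j)
    push_cast at hc
    push_cast
    nlinarith [hc]
  rw [Finset.sum_congr rfl (fun j _ => h j), ← Finset.mul_sum]
  have h2 : ∑ j ∈ range (p + 2), (j : ℝ) * ((p + 1).choose j : ℝ) = ((p:ℝ) + 1) * 2 ^ p := by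
    have := moment1 p; push_cast at this ⊢; linarith
  rw [h2]
  push_cast; ring

lemma var_id (p : ℕ) :
    ∑ j ∈ range (p + 3), ((p + 2).choose j : ℝ) * (2 * (j : ℝ) - ((p : ℝ) + 2)) ^ 2
      = ((p : ℝ) + 2) * 2 ^ (p + 2) := by
  have expand : ∀ j : ℕ, ((p + 2).choose j : ℝ) * (2 * (j : ℝ) - ((p : ℝ) + 2)) ^ 2
      = 4 * ((j : ℝ) * ((j : ℝ) - 1) * ((p + 2).choose j : ℝ))
        + (4 - 4 * ((p : ℝ) + 2)) * ((j : ℝ) * ((p + 2).choose j : ℝ))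
        + ((p : ℝ) + 2) ^ 2 * ((p + 2).choose j : ℝ) := fun j => by ring
  rw [Finset.sum_congr rfl (fun j _ => expand j), Finset.sum_add_distrib, Finset.sum_add_distrib,
    ← Finset.mul_sum, ← Finset.mul_sum, ← Finset.mul_sum]
  have E2 : ∑ j ∈ range (p + 3), ((p + 2).choose j : ℝ) = 2 ^ (p + 2) :=
    sum_range_choose_real (p + 2)
  have E1 : ∑ j ∈ range (p + 3), (j : ℝ) * ((p + 2).choose j : ℝ)
      = ((p : ℝ) + 2) * 2 ^ (p + 1) := by
    have := moment1 (p + 1); push_cast at this ⊢; linarith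
  have E0 : ∑ j ∈ range (p + 3), (j : ℝ) * ((j : ℝ) - 1) * ((p + 2).choose j : ℝ)
      = ((p : ℝ) + 2) * ((p : ℝ) + 1) * 2 ^ p := by
    have := moment2 p; push_cast at this ⊢; linarith
  rw [E2, E1, E0]; ring

/-! ### cut quantities -/

def massR (n j : ℕ) : ℝ := (n.choose j : ℝ) / 2 ^ n

def Ecut (n k : ℕ) : ℝ :=
  (∑ j ∈ Finset.Icc (k + 1) n, massR n j) - (if k < n / 2 then 1 else 0)

def Ccost (n : ℕ) : ℝ := ∑ k ∈ Finset.range n, |Ecut n k|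

lemma massR_nonneg (n j : ℕ) : 0 ≤ massR n j := by
  unfold massR; positivity

lemma sum_massR (n : ℕ) : ∑ j ∈ Finset.Icc 0 n, massR n j = 1 := by
  have : Finset.Icc 0 n = Finset.range (n + 1) := by ext j; simp
  rw [this]
  unfold massR
  rw [← Finset.sum_div, sum_range_choose_real]
  field_simp

lemma Ecut_ge (n k : ℕ) (h : n ≤ k) : Ecut n k = 0 := by
  unfold Ecut
  have h1 : Finset.Icc (k + 1) n = ∅ := by rw [Finset.Icc_eq_empty]; omega
  have h2 : ¬ (k < n / 2) := by omega
  rw [h1, if_neg h2]; simp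

lemma sum_massR_le (n k : ℕ) (hk : k ≤ n) :
    (∑ j ∈ Finset.Icc 0 k, massR n j) + (∑ j ∈ Finset.Icc (k+1) n, massR n j) = 1 := by
  have e1 : Finset.Icc 0 k = Finset.Ico 0 (k + 1) := by ext j; simp
  have e2 : Finset.Icc (k + 1) n = Finset.Ico (k + 1) (n + 1) := by ext j; simp
  have e3 : Finset.Icc 0 n = Finset.Ico 0 (n + 1) := by ext j; simp
  rw [e1, e2, Finset.sum_Ico_consecutive _ (by omega) (by omega)]
  rw [← e3, sum_massR]

lemma Ecut_telescope (n w : ℕ) (h1 : 1 ≤ w) (h2 : w ≤ n) :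
    Ecut n w - Ecut n (w - 1) = - massR n w + (if w = n / 2 then 1 else 0) := by
  obtain ⟨v, rfl⟩ : ∃ v, w = v + 1 := ⟨w - 1, by omega⟩
  simp only [Nat.add_sub_cancel]
  unfold Ecut
  have hins : Finset.Icc (v + 1) n = insert (v + 1) (Finset.Icc (v + 2) n) := by
    ext j; simp; omega
  rw [hins, Finset.sum_insert (by simp)]
  split_ifs <;> push_cast <;> ring_nf <;> first | rfl | omega | (exfalso; omega) | ring

lemma Ecut_abs_lower (n k : ℕ) (hk : k < n / 2) :
    |Ecut n k| = ∑ j ∈ Finset.Icc 0 k, massR n j := by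
  have hkn : k ≤ n := by omega
  have h := sum_massR_le n k hkn
  have h0 : 0 ≤ ∑ j ∈ Finset.Icc 0 k, massR n j :=
    Finset.sum_nonneg fun j _ => massR_nonneg n j
  unfold Ecut
  rw [if_pos hk, abs_of_nonpos (by linarith)]
  linarith

lemma Ecut_abs_upper (n k : ℕ) (hk : n / 2 ≤ k) :
    |Ecut n k| = ∑ j ∈ Finset.Icc (k + 1) n, massR n j := by
  unfold Ecut
  rw [if_neg (by omega), sub_zero,
    abs_of_nonneg (Finset.sum_nonneg fun j _ => massR_nonneg n j)]

lemma Ccost_eq (n : ℕ) (hn : 2 ≤ n) :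
    Ccost n = ∑ j ∈ range (n + 1), massR n j * (((n / 2 - j) + (j - n / 2) : ℕ) : ℝ) := by
  have step1 : ∀ k ∈ range n, |Ecut n k|
      = ∑ j ∈ range (n + 1), massR n j *
          ((if j ≤ k ∧ k < n / 2 then 1 else 0) + (if n / 2 ≤ k ∧ k < j then 1 else 0)) := by
    intro k hk
    have hkn : k < n := Finset.mem_range.mp hk
    by_cases hc : k < n / 2
    · rw [Ecut_abs_lower n k hc]
      have hf : Finset.Icc 0 k = Finset.filter (fun j => j ≤ k ∧ k < n / 2) (range (n + 1)) := by
        ext j; simp [Finset.mem_filter]; omega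
      rw [hf, Finset.sum_filter]
      refine Finset.sum_congr rfl fun j _ => ?_
      have h2 : ¬ (n / 2 ≤ k ∧ k < j) := by omega
      rw [if_neg h2, add_zero]
      by_cases h1 : j ≤ k ∧ k < n / 2 <;> simp [h1]
    · rw [Ecut_abs_upper n k (by omega)]
      have hf : Finset.Icc (k + 1) n
          = Finset.filter (fun j => n / 2 ≤ k ∧ k < j) (range (n + 1)) := by
        ext j; simp [Finset.mem_filter]; omega
      rw [hf, Finset.sum_filter]
      refine Finset.sum_congr rfl fun j _ => ?_
      have h2 : ¬ (j ≤ k ∧ k < n / 2) := by omega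
      rw [if_neg h2, zero_add]
      by_cases h1 : n / 2 ≤ k ∧ k < j <;> simp [h1]
  unfold Ccost
  rw [Finset.sum_congr rfl step1, Finset.sum_comm]
  refine Finset.sum_congr rfl fun j hj => ?_
  have hjn : j ≤ n := by have := Finset.mem_range.mp hj; omega
  rw [← Finset.mul_sum]
  congr 1
  rw [Finset.sum_add_distrib, Finset.sum_boole, Finset.sum_boole]
  have hf1 : Finset.filter (fun k => j ≤ k ∧ k < n / 2) (range n) = Finset.Ico j (n / 2) := by
    ext k; simp [Finset.mem_filter]; omega
  have hf2 : Finset.filter (fun k => n / 2 ≤ k ∧ k < j) (range n) = Finset.Ico (n / 2) j := by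
    ext k; simp [Finset.mem_filter]; omega
  rw [hf1, hf2, Nat.card_Ico, Nat.card_Ico]
  push_cast; ring

lemma Ccost_nonneg (n : ℕ) : 0 ≤ Ccost n :=
  Finset.sum_nonneg fun k _ => abs_nonneg _

lemma Ccost_pos (n : ℕ) (hn : 2 ≤ n) : 0 < Ccost n := by
  have hmem : n - 1 ∈ range n := by simp; omega
  have hE : Ecut n (n - 1) = massR n n := by
    unfold Ecut
    have h1 : Finset.Icc (n - 1 + 1) n = {n} := by ext j; simp; omega
    rw [h1, if_neg (by omega), Finset.sum_singleton, sub_zero]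
  have hpos : 0 < |Ecut n (n - 1)| := by
    rw [hE]
    have : (0:ℝ) < massR n n := by
      unfold massR
      rw [Nat.choose_self]
      positivity
    rwa [abs_of_pos this]
  exact lt_of_lt_of_le hpos (Finset.single_le_sum (f := fun k => |Ecut n k|) (fun k _ => abs_nonneg _) hmem)

lemma Ccost_le (n : ℕ) (hn : 2 ≤ n) (he : Even n) : Ccost n ≤ Real.sqrt n / 2 := by
  set d : ℕ → ℝ := fun j => (((n / 2 - j) + (j - n / 2) : ℕ) : ℝ) with hd
  have hd_sq : ∀ j, d j ^ 2 = ((j : ℝ) - (n / 2 : ℕ)) ^ 2 := by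
    intro j
    rcases le_total j (n / 2) with h | h
    · have : (j - n / 2 : ℕ) = 0 := by omega
      rw [hd]; simp only [this]
      rw [Nat.cast_add, Nat.cast_sub h]
      push_cast; ring
    · have : (n / 2 - j : ℕ) = 0 := by omega
      rw [hd]; simp only [this]
      rw [Nat.cast_add, Nat.cast_sub h]
      push_cast; ring
  have hsum1 : ∑ j ∈ range (n + 1), massR n j = 1 := by
    have : Finset.Icc 0 n = range (n + 1) := by ext j; simp
    rw [← this, sum_massR]
  have hsum2 : ∑ j ∈ range (n + 1), massR n j * d j ^ 2 = (n : ℝ) / 4 := by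
    obtain ⟨p, rfl⟩ : ∃ p, n = p + 2 := ⟨n - 2, by omega⟩
    have hvar := var_id p
    have hterm : ∀ j ∈ range (p + 3), massR (p + 2) j * d j ^ 2
        = (1 / 4) * (1 / 2 ^ (p + 2)) * (((p + 2).choose j : ℝ) * (2 * (j : ℝ) - ((p : ℝ) + 2)) ^ 2) := by
      intro j _
      rw [hd_sq j]
      unfold massR
      have hp2 : ((p + 2) / 2) * 2 = p + 2 := by
        obtain ⟨q, hq⟩ := he; omega
      have hhalf : (((p + 2) / 2 : ℕ) : ℝ) = ((p : ℝ) + 2) / 2 := by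
        have h' := congrArg (Nat.cast (R := ℝ)) hp2
        push_cast at h'
        linarith
      rw [hhalf]
      field_simp
      ring
    rw [Finset.sum_congr rfl hterm, ← Finset.mul_sum, hvar]
    field_simp
    push_cast; ring
  have hCS := Finset.sum_mul_sq_le_sq_mul_sq (range (n + 1))
    (fun j => Real.sqrt (massR n j)) (fun j => Real.sqrt (massR n j) * d j)
  have hL : ∑ j ∈ range (n + 1), Real.sqrt (massR n j) * (Real.sqrt (massR n j) * d j)
      = Ccost n := by
    rw [Ccost_eq n hn]
    refine Finset.sum_congr rfl fun j _ => ?_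
    rw [← mul_assoc, Real.mul_self_sqrt (massR_nonneg n j)]
  have hf2 : ∑ j ∈ range (n + 1), Real.sqrt (massR n j) ^ 2 = 1 := by
    rw [Finset.sum_congr rfl fun j _ => Real.sq_sqrt (massR_nonneg n j), hsum1]
  have hg2 : ∑ j ∈ range (n + 1), (Real.sqrt (massR n j) * d j) ^ 2 = (n : ℝ) / 4 := by
    rw [Finset.sum_congr rfl fun j _ => ?_, hsum2]
    rw [mul_pow, Real.sq_sqrt (massR_nonneg n j)]
  rw [hL, hf2, hg2, one_mul] at hCS
  have h0 : 0 ≤ Ccost n := Ccost_nonneg n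
  calc Ccost n = Real.sqrt (Ccost n ^ 2) := (Real.sqrt_sq h0).symm
    _ ≤ Real.sqrt ((n : ℝ) / 4) := Real.sqrt_le_sqrt hCS
    _ = Real.sqrt n / 2 := by
        rw [show (n : ℝ) / 4 = (Real.sqrt n / 2) ^ 2 from by
          rw [div_pow, Real.sq_sqrt (Nat.cast_nonneg n)]; norm_num]
        exact Real.sqrt_sq (by positivity)

lemma core_identity (n : ℕ) (hn : 2 ≤ n) (w : ℕ) (hw : w ≤ n) :
    (1 / (n : ℝ)) * (((n : ℝ) - w) * (Ecut n w / (((n - 1).choose w : ℕ) : ℝ))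
        - (w : ℝ) * (Ecut n (w - 1) / (((n - 1).choose (w - 1) : ℕ) : ℝ)))
      = (if w = n / 2 then ((n.choose (n / 2) : ℝ))⁻¹ else 0) - ((2 : ℝ) ^ n)⁻¹ := by
  have hn0 : (n : ℝ) ≠ 0 := by positivity
  rcases Nat.eq_zero_or_pos w with hw0 | hw1
  · subst hw0
    rw [if_neg (by omega)]
    have hE0 : Ecut n 0 = - massR n 0 := by
      unfold Ecut
      rw [if_pos (by omega)]
      have := sum_massR_le n 0 (by omega)
      have h00 : Finset.Icc 0 0 = {0} := rfl
      rw [h00, Finset.sum_singleton] at this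
      linarith
    rw [hE0]
    have : massR n 0 = ((2 : ℝ) ^ n)⁻¹ := by
      unfold massR; rw [Nat.choose_zero_right]; push_cast; field_simp
    rw [this]
    simp only [Nat.choose_zero_right, Nat.cast_zero, Nat.cast_one]
    field_simp
    ring
  · -- 1 ≤ w
    obtain ⟨p, rfl⟩ : ∃ p, n = p + 1 := ⟨n - 1, by omega⟩
    obtain ⟨v, rfl⟩ : ∃ v, w = v + 1 := ⟨w - 1, by omega⟩
    simp only [Nat.add_sub_cancel]
    have hvp : v + 1 ≤ p + 1 := hw
    have hB : ((v : ℝ) + 1) * ((p + 1).choose (v + 1) : ℝ) = ((p : ℝ) + 1) * (p.choose v : ℝ) := by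
      have hc := congrArg (Nat.cast (R := ℝ)) (Nat.add_one_mul_choose_eq p v)
      push_cast at hc
      linarith
    have hPascal : (((p + 1).choose (v + 1) : ℕ) : ℝ)
        = (p.choose v : ℝ) + (p.choose (v + 1) : ℝ) := by
      exact_mod_cast congrArg (Nat.cast (R := ℝ)) (Nat.choose_succ_succ p v)
    have hCn : (((p + 1).choose (v + 1) : ℕ) : ℝ) ≠ 0 := by
      have := Nat.choose_pos hvp; positivity
    have hCv : ((p.choose v : ℕ) : ℝ) ≠ 0 := by
      have := Nat.choose_pos (show v ≤ p by omega); positivity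
    have hA : (((p + 1 : ℕ) : ℝ) - ((v + 1 : ℕ) : ℝ))
          * (Ecut (p + 1) (v + 1) / ((p.choose (v + 1) : ℕ) : ℝ))
        = ((p + 1 : ℕ) : ℝ) * (Ecut (p + 1) (v + 1) / (((p + 1).choose (v + 1) : ℕ) : ℝ)) := by
      rcases Nat.lt_or_ge v p with hvlt | hvge
      · have hCv1 : ((p.choose (v + 1) : ℕ) : ℝ) ≠ 0 := by
          have := Nat.choose_pos (show v + 1 ≤ p by omega); positivity
        have hAA : ((p : ℝ) - v) * (((p + 1).choose (v + 1) : ℕ) : ℝ)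
            = ((p : ℝ) + 1) * ((p.choose (v + 1) : ℕ) : ℝ) := by
          linear_combination ((p : ℝ) + 1) * hPascal - hB
        push_cast
        field_simp
        linear_combination (Ecut (p + 1) (v + 1)) * hAA
      · have hv : v = p := by omega
        subst hv
        rw [Ecut_ge (v + 1) (v + 1) le_rfl]
        simp
    have hB' : ((v + 1 : ℕ) : ℝ) * (Ecut (p + 1) v / ((p.choose v : ℕ) : ℝ))
        = ((p + 1 : ℕ) : ℝ) * (Ecut (p + 1) v / (((p + 1).choose (v + 1) : ℕ) : ℝ)) := by
      push_cast
      field_simp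
      linear_combination (Ecut (p + 1) v) * hB
    rw [hA, hB']
    have hp1 : ((p + 1 : ℕ) : ℝ) ≠ 0 := by positivity
    have hstep : (1 / ((p + 1 : ℕ) : ℝ))
          * (((p + 1 : ℕ) : ℝ) * (Ecut (p + 1) (v + 1) / (((p + 1).choose (v + 1) : ℕ) : ℝ))
            - ((p + 1 : ℕ) : ℝ) * (Ecut (p + 1) v / (((p + 1).choose (v + 1) : ℕ) : ℝ)))
        = (Ecut (p + 1) (v + 1) - Ecut (p + 1) v) / (((p + 1).choose (v + 1) : ℕ) : ℝ) := by
      field_simp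
    rw [hstep]
    have htel : Ecut (p + 1) (v + 1) - Ecut (p + 1) v
        = - massR (p + 1) (v + 1) + (if v + 1 = (p + 1) / 2 then 1 else 0) := by
      have := Ecut_telescope (p + 1) (v + 1) (by omega) hw
      simpa using this
    rw [htel]
    have hmass : massR (p + 1) (v + 1) / (((p + 1).choose (v + 1) : ℕ) : ℝ)
        = ((2 : ℝ) ^ (p + 1))⁻¹ := by
      unfold massR
      field_simp
    by_cases hv2 : v + 1 = (p + 1) / 2
    · rw [if_pos hv2, if_pos hv2, add_div, neg_div, hmass, ← hv2, one_div]
      ring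
    · rw [if_neg hv2, if_neg hv2, add_zero, neg_div, hmass]
      ring

lemma fin2_cases (v : Fin 2) : v = 0 ∨ v = 1 := by
  fin_cases v
  · exact Or.inl rfl
  · exact Or.inr rfl

lemma max_add_max (a : ℝ) : max a 0 + max (-a) 0 = |a| := by
  rcases le_total a 0 <;> simp [max_def, abs] <;> split_ifs <;> linarith

lemma max_sub_max (a : ℝ) : max a 0 - max (-a) 0 = a := by
  rcases le_total a 0 <;> simp [max_def] <;> split_ifs <;> linarith

/-- split a sum over bit strings along coordinate `i` and weight -/
lemma sum_split {n : ℕ} (hn : 1 ≤ n) (i : Fin n) (g : Fin 2 → ℕ → ℝ) :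
    ∑ x : Fin n → Fin 2, g (x i) (∑ j, ((x j : ℕ)))
      = ∑ k ∈ Finset.range n, (((n - 1).choose k : ℕ) : ℝ) * (g 0 k + g 1 (k + 1)) := by
  classical
  have hcard : Fintype.card {j : Fin n // j ≠ i} = n - 1 := by
    simp [Fintype.card_subtype_compl]
  set e := Equiv.funSplitAt i (Fin 2) with he
  have hsum : ∑ x : Fin n → Fin 2, g (x i) (∑ j, ((x j : ℕ)))
      = ∑ q : Fin 2 × ({j : Fin n // j ≠ i} → Fin 2),
          g ((e.symm q) i) (∑ j, (((e.symm q) j : ℕ))) :=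
    (Equiv.sum_comp e.symm (fun x => g (x i) (∑ j, ((x j : ℕ))))).symm
  rw [hsum, Fintype.sum_prod_type]
  have happ_i : ∀ (v : Fin 2) (y : {j : Fin n // j ≠ i} → Fin 2), (e.symm (v, y)) i = v := by
    intro v y; rw [he, Equiv.funSplitAt_symm_apply]; simp
  have hwt : ∀ (v : Fin 2) (y : {j : Fin n // j ≠ i} → Fin 2),
      (∑ j, (((e.symm (v, y)) j : ℕ)))
        = (v : ℕ) + ∑ j' : {j : Fin n // j ≠ i}, ((y j' : ℕ)) := by
    intro v y
    rw [← Finset.add_sum_erase Finset.univ (fun j => (((e.symm (v, y)) j : ℕ)))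
      (Finset.mem_univ i)]
    congr 1
    · rw [happ_i]
    · rw [Finset.sum_subtype (p := fun j => j ≠ i) (Finset.univ.erase i)
        (by intro x; simp) (fun j => (((e.symm (v, y)) j : ℕ)))]
      refine Finset.sum_congr rfl fun j' _ => ?_
      rw [he, Equiv.funSplitAt_symm_apply, dif_neg j'.2]
  have hstep : ∀ v : Fin 2,
      (∑ y : {j : Fin n // j ≠ i} → Fin 2, g ((e.symm (v, y)) i) (∑ j, (((e.symm (v, y)) j : ℕ))))
        = ∑ y : {j : Fin n // j ≠ i} → Fin 2, g v ((v : ℕ) + ∑ j', ((y j' : ℕ))) := by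
    intro v
    refine Finset.sum_congr rfl fun y _ => ?_
    rw [happ_i, hwt]
  rw [Fin.sum_univ_two, hstep 0, hstep 1]
  have h0 : ∑ y : {j : Fin n // j ≠ i} → Fin 2, g 0 (((0 : Fin 2) : ℕ) + ∑ j', ((y j' : ℕ)))
      = ∑ k ∈ Finset.range n, (((n - 1).choose k : ℕ) : ℝ) * g 0 k := by
    have h := sum_weight (ι := {j : Fin n // j ≠ i}) (fun k => g 0 k)
    rw [hcard, show (n - 1) + 1 = n by omega] at h
    simpa using h
  have h1 : ∑ y : {j : Fin n // j ≠ i} → Fin 2, g 1 (((1 : Fin 2) : ℕ) + ∑ j', ((y j' : ℕ)))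
      = ∑ k ∈ Finset.range n, (((n - 1).choose k : ℕ) : ℝ) * g 1 (k + 1) := by
    have h := sum_weight (ι := {j : Fin n // j ≠ i}) (fun k => g 1 (1 + k))
    rw [hcard, show (n - 1) + 1 = n by omega] at h
    have h' : ∑ k ∈ Finset.range n, (((n - 1).choose k : ℕ) : ℝ) * g 1 (1 + k)
        = ∑ k ∈ Finset.range n, (((n - 1).choose k : ℕ) : ℝ) * g 1 (k + 1) :=
      Finset.sum_congr rfl fun k _ => by rw [Nat.add_comm]
    rw [← h']
    simpa using h
  rw [h0, h1, ← Finset.sum_add_distrib]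
  exact Finset.sum_congr rfl fun k _ => by ring

/-! ### the even construction -/

def wtF {n : ℕ} (x : Fin n → Fin 2) : ℕ := ∑ j, ((x j : ℕ))

lemma wtF_le {n : ℕ} (x : Fin n → Fin 2) : wtF x ≤ n := by
  unfold wtF
  calc ∑ j, ((x j : ℕ)) ≤ ∑ _j : Fin n, 1 :=
        Finset.sum_le_sum fun j _ => by have := (x j).isLt; omega
    _ = n := by simp

def Tq (n k : ℕ) : ℝ := max (Ecut n k) 0 / (((n - 1).choose k : ℕ) : ℝ)
def Tq' (n k : ℕ) : ℝ := max (- Ecut n k) 0 / (((n - 1).choose k : ℕ) : ℝ)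

lemma Tq_nonneg (n k : ℕ) : 0 ≤ Tq n k :=
  div_nonneg (le_max_right _ _) (Nat.cast_nonneg _)
lemma Tq'_nonneg (n k : ℕ) : 0 ≤ Tq' n k :=
  div_nonneg (le_max_right _ _) (Nat.cast_nonneg _)

lemma Tq_add (n k : ℕ) : Tq n k + Tq' n k = |Ecut n k| / (((n - 1).choose k : ℕ) : ℝ) := by
  unfold Tq Tq'; rw [← add_div, max_add_max]
lemma Tq_sub (n k : ℕ) : Tq n k - Tq' n k = Ecut n k / (((n - 1).choose k : ℕ) : ℝ) := by
  unfold Tq Tq'; rw [div_sub_div_same, max_sub_max]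

def Teven (n : ℕ) (i : Fin n) (x : Fin n → Fin 2) : ℝ :=
  (Ccost n)⁻¹ * (if x i = 0 then Tq n (wtF x) else Tq' n (wtF x - 1))
def Heven (n : ℕ) (i : Fin n) (x : Fin n → Fin 2) : ℝ :=
  (Ccost n)⁻¹ * (if x i = 0 then Tq' n (wtF x) else Tq n (wtF x - 1))

def deltaEven (n : ℕ) (x : Fin n → Fin 2) : ℝ :=
  (if wtF x = n / 2 then ((n.choose (n / 2) : ℝ))⁻¹ else 0) - ((2 : ℝ) ^ n)⁻¹

lemma sum_pair (n : ℕ) (hn : 2 ≤ n) (i : Fin n) (q q' : ℕ → ℝ)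
    (hq : ∀ k, k < n → q k + q' k = |Ecut n k| / (((n - 1).choose k : ℕ) : ℝ)) :
    ∑ x : Fin n → Fin 2, (Ccost n)⁻¹ * (if x i = 0 then q (wtF x) else q' (wtF x - 1)) = 1 := by
  have hC := Ccost_pos n hn
  have key : ∑ x : Fin n → Fin 2,
      (Ccost n)⁻¹ * (if x i = 0 then q (wtF x) else q' (wtF x - 1))
      = ∑ k ∈ Finset.range n, (((n - 1).choose k : ℕ) : ℝ)
          * ((Ccost n)⁻¹ * (q k) + (Ccost n)⁻¹ * (q' ((k + 1) - 1))) := by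
    have := sum_split (n := n) (by omega) i
      (fun v k => (Ccost n)⁻¹ * (if v = 0 then q k else q' (k - 1)))
    simpa [wtF] using this
  rw [key]
  have key2 : ∀ k ∈ Finset.range n,
      (((n - 1).choose k : ℕ) : ℝ) * ((Ccost n)⁻¹ * (q k) + (Ccost n)⁻¹ * (q' ((k + 1) - 1)))
        = (Ccost n)⁻¹ * |Ecut n k| := by
    intro k hk
    have hkn : k < n := Finset.mem_range.mp hk
    have hch : (((n - 1).choose k : ℕ) : ℝ) ≠ 0 := by
      have := Nat.choose_pos (show k ≤ n - 1 by omega); positivity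
    rw [Nat.add_sub_cancel]
    rw [show (Ccost n)⁻¹ * (q k) + (Ccost n)⁻¹ * (q' k) = (Ccost n)⁻¹ * (q k + q' k) by ring,
      hq k hkn]
    field_simp
  rw [Finset.sum_congr rfl key2, ← Finset.mul_sum]
  have hcc : ∑ k ∈ range n, |Ecut n k| = Ccost n := rfl
  rw [hcc]
  field_simp

lemma Teven_sum (n : ℕ) (hn : 2 ≤ n) (i : Fin n) : ∑ x, Teven n i x = 1 :=
  sum_pair n hn i (Tq n) (Tq' n) (fun k _ => Tq_add n k)

lemma Heven_sum (n : ℕ) (hn : 2 ≤ n) (i : Fin n) : ∑ x, Heven n i x = 1 :=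
  sum_pair n hn i (Tq' n) (Tq n) (fun k _ => by rw [add_comm]; exact Tq_add n k)

lemma wt_update {n : ℕ} (z : Fin n → Fin 2) (i : Fin n) (v : Fin 2) :
    wtF (Function.update z i v) = (v : ℕ) + ∑ j ∈ Finset.univ.erase i, ((z j : ℕ)) := by
  unfold wtF
  rw [← Finset.add_sum_erase Finset.univ (fun j => ((Function.update z i v j : ℕ)))
    (Finset.mem_univ i)]
  congr 1
  · rw [Function.update_self]
  · exact Finset.sum_congr rfl fun j hj =>
      by rw [Function.update_of_ne (Finset.mem_erase.mp hj).1]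

lemma marg_even (n : ℕ) (i : Fin n) (z : Fin n → Fin 2) :
    Teven n i (Function.update z i 0) + Teven n i (Function.update z i 1)
      = Heven n i (Function.update z i 0) + Heven n i (Function.update z i 1) := by
  unfold Teven Heven
  have h0 : Function.update z i 0 i = 0 := Function.update_self i 0 z
  have h1 : Function.update z i 1 i = 1 := Function.update_self i 1 z
  rw [h0, h1]
  rw [wt_update z i 0, wt_update z i 1]
  simp
  ring

lemma dec_even (n : ℕ) (hn : 2 ≤ n) (x : Fin n → Fin 2) :
    deltaEven n x = ∑ i, (Ccost n / n) * (Teven n i x - Heven n i x) := by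
  have hC := Ccost_pos n hn
  have hCne : Ccost n ≠ 0 := ne_of_gt hC
  have hn0 : (n : ℝ) ≠ 0 := by positivity
  set w := wtF x with hw
  set A := Ecut n w / (((n - 1).choose w : ℕ) : ℝ) with hA
  set B := - (Ecut n (w - 1) / (((n - 1).choose (w - 1) : ℕ) : ℝ)) with hB
  have hTH : ∀ i, Teven n i x - Heven n i x = (Ccost n)⁻¹ * (if x i = 0 then A else B) := by
    intro i
    unfold Teven Heven
    by_cases h : x i = 0
    · rw [if_pos h, if_pos h, if_pos h, ← mul_sub, Tq_sub]
    · rw [if_neg h, if_neg h, if_neg h, ← mul_sub]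
      rw [show Tq' n (w - 1) - Tq n (w - 1) = -(Tq n (w-1) - Tq' n (w-1)) by ring, Tq_sub]
  have hco : ∀ i, (Ccost n / n) * (Teven n i x - Heven n i x)
      = (1 / n) * (if x i = 0 then A else B) := by
    intro i; rw [hTH i]; field_simp
  rw [Finset.sum_congr rfl fun i _ => hco i]
  have hval : ∀ i : Fin n, (if x i = 0 then A else B) = A + ((x i : ℕ) : ℝ) * (B - A) := by
    intro i
    rcases fin2_cases (x i) with h | h
    · rw [if_pos h, h]; simp
    · rw [if_neg (by rw [h]; decide), h, Fin.val_one]; push_cast; ring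
  rw [Finset.sum_congr rfl fun i _ => by rw [hval i]]
  rw [← Finset.mul_sum, Finset.sum_add_distrib, Finset.sum_const, Finset.card_univ,
    Fintype.card_fin, ← Finset.sum_mul]
  have hcast : (∑ i, ((x i : ℕ) : ℝ)) = (w : ℝ) := by
    rw [hw]; unfold wtF; push_cast; rfl
  rw [hcast]
  have := core_identity n hn w (hw ▸ wtF_le x)
  unfold deltaEven
  rw [← hw, ← this]
  rw [hA, hB]
  ring

lemma sum_c_even (n : ℕ) (hn : 2 ≤ n) :
    ∑ _i : Fin n, (Ccost n / n) = Ccost n := by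
  rw [Finset.sum_const, Finset.card_univ, Fintype.card_fin, nsmul_eq_mul]
  field_simp

lemma Teven_nonneg (n : ℕ) (hn : 2 ≤ n) (i : Fin n) (x : Fin n → Fin 2) : 0 ≤ Teven n i x := by
  unfold Teven
  have := (Ccost_pos n hn).le
  have h1 : (0:ℝ) ≤ (Ccost n)⁻¹ := by positivity
  refine mul_nonneg h1 ?_
  split_ifs
  · exact Tq_nonneg n _
  · exact Tq'_nonneg n _

lemma Heven_nonneg (n : ℕ) (hn : 2 ≤ n) (i : Fin n) (x : Fin n → Fin 2) : 0 ≤ Heven n i x := by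
  unfold Heven
  have := (Ccost_pos n hn).le
  have h1 : (0:ℝ) ≤ (Ccost n)⁻¹ := by positivity
  refine mul_nonneg h1 ?_
  split_ifs
  · exact Tq'_nonneg n _
  · exact Tq_nonneg n _


-- ===== stage 6: matrix identification =====

lemma iid_eq (n : ℕ) :
    iidOn (Fin n) (((2 : ℂ))⁻¹ • (1 : Matrix (Fin 2) (Fin 2) ℂ))
      = Matrix.diagonal (fun _ : Fin n → Fin 2 => ((2 : ℂ) ^ n)⁻¹) := by
  ext a b
  by_cases hab : a = b
  · subst hab
    rw [Matrix.diagonal_apply_eq]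
    unfold iidOn
    have h : ∀ i : Fin n, ((2 : ℂ)⁻¹ • (1 : Matrix (Fin 2) (Fin 2) ℂ)) (a i) (a i) = 2⁻¹ := by
      intro i
      rw [Matrix.smul_apply, Matrix.one_apply_eq, smul_eq_mul, mul_one]
    rw [Finset.prod_congr rfl (fun i _ => h i), Finset.prod_const, Finset.card_univ,
      Fintype.card_fin, inv_pow]
  · rw [Matrix.diagonal_apply_ne _ hab]
    obtain ⟨i, hi⟩ := Function.ne_iff.mp hab
    unfold iidOn
    refine Finset.prod_eq_zero (Finset.mem_univ i) ?_
    rw [Matrix.smul_apply, Matrix.one_apply_ne hi, smul_eq_mul, mul_zero]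

lemma xi_even_eq (n : ℕ) (hn : 1 ≤ n) (he : Even n) : xi n = xiEven n := by
  obtain ⟨m, rfl⟩ : ∃ m, n = m + 1 := ⟨n - 1, by omega⟩
  simp only [xi]; exact if_pos he

lemma even_matrix_eq (n : ℕ) (hn : 2 ≤ n) (he : Even n) :
    xi n - iidOn (Fin n) (((2 : ℂ))⁻¹ • (1 : Matrix (Fin 2) (Fin 2) ℂ))
      = Matrix.diagonal (fun x => ((deltaEven n x : ℝ) : ℂ)) := by
  rw [xi_even_eq n (by omega) he, iid_eq n]
  unfold xiEven
  rw [Matrix.diagonal_sub]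
  refine congrArg Matrix.diagonal (funext fun x => ?_)
  have hiff : (2 * (∑ i, ((x i : ℕ))) = n) ↔ (wtF x = n / 2) := by
    unfold wtF
    obtain ⟨q, hq⟩ := he
    omega
  unfold deltaEven
  split_ifs with h1 h2 h2
  · push_cast; ring
  · exact absurd (hiff.mp h1) h2
  · exact absurd (hiff.mpr h2) h1
  · push_cast; ring

lemma even_W1_bound (n : ℕ) (hn : 2 ≤ n) (he : Even n) :
    W1 (xi n - iidOn (Fin n) (((2 : ℂ))⁻¹ • (1 : Matrix (Fin 2) (Fin 2) ℂ)))
      ≤ Real.sqrt n / 2 := by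
  rw [even_matrix_eq n hn he]
  calc W1 (Matrix.diagonal (fun x => ((deltaEven n x : ℝ) : ℂ)))
      ≤ ∑ _i : Fin n, (Ccost n / n) :=
        W1_le_of_scalarData (deltaEven n) (fun _ => Ccost n / n) (Teven n) (Heven n)
          (fun i => div_nonneg (Ccost_pos n hn).le (Nat.cast_nonneg n))
          (Teven_nonneg n hn) (Heven_nonneg n hn) (Teven_sum n hn) (Heven_sum n hn)
          (marg_even n) (dec_even n hn)
    _ = Ccost n := sum_c_even n hn
    _ ≤ Real.sqrt n / 2 := Ccost_le n hn he

-- ===== stage 7: odd case =====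

def snocEquiv (p : ℕ) : (Fin (p + 1) → Fin 2) ≃ (Fin p → Fin 2) × Fin 2 where
  toFun x := (fun j => x j.castSucc, x (Fin.last p))
  invFun q := Fin.snoc q.1 q.2
  left_inv x := by
    funext j
    refine Fin.lastCases ?_ ?_ j
    · simp
    · intro j'; simp
  right_inv q := by
    obtain ⟨y, v⟩ := q
    refine Prod.ext ?_ ?_
    · funext j; simp
    · simp

lemma sum_snoc (p : ℕ) (G : (Fin p → Fin 2) → Fin 2 → ℝ) :
    ∑ x : Fin (p + 1) → Fin 2, G (fun j => x j.castSucc) (x (Fin.last p))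
      = ∑ y : Fin p → Fin 2, ∑ v : Fin 2, G y v := by
  have h := (Equiv.sum_comp (snocEquiv p).symm
    (fun x => G (fun j => x j.castSucc) (x (Fin.last p)))).symm
  rw [h, Fintype.sum_prod_type]
  refine Finset.sum_congr rfl fun y _ => Finset.sum_congr rfl fun v _ => ?_
  have h1 : ∀ j : Fin p, ((snocEquiv p).symm (y, v)) j.castSucc = y j := fun j => by
    simp [snocEquiv]
  have h2 : ((snocEquiv p).symm (y, v)) (Fin.last p) = v := by simp [snocEquiv]
  rw [funext h1, h2]

def Todd (p : ℕ) (i : Fin (p + 1)) (x : Fin (p + 1) → Fin 2) : ℝ :=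
  if h : i = Fin.last p then ((2 : ℝ) ^ (p + 1))⁻¹
  else Teven p (i.castPred h) (fun j => x j.castSucc) * 2⁻¹
def Hodd (p : ℕ) (i : Fin (p + 1)) (x : Fin (p + 1) → Fin 2) : ℝ :=
  if h : i = Fin.last p then ((2 : ℝ) ^ (p + 1))⁻¹
  else Heven p (i.castPred h) (fun j => x j.castSucc) * 2⁻¹
def codd (p : ℕ) (i : Fin (p + 1)) : ℝ :=
  if i = Fin.last p then 0 else Ccost p / p

lemma castSucc_ne_last {p : ℕ} (i : Fin p) : i.castSucc ≠ Fin.last p :=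
  (Fin.castSucc_lt_last i).ne

lemma update_comp {p : ℕ} (x : Fin (p + 1) → Fin 2) (i : Fin p) (v : Fin 2) :
    (fun j : Fin p => (Function.update x i.castSucc v) j.castSucc)
      = Function.update (fun j : Fin p => x j.castSucc) i v := by
  funext j
  by_cases h : j = i
  · subst h; rw [Function.update_self, Function.update_self]
  · rw [Function.update_of_ne h, Function.update_of_ne (fun hc => h (Fin.castSucc_inj.mp hc))]

lemma odd_data_bound (p : ℕ) (hp : 2 ≤ p) (hep : Even p) :
    W1 (Matrix.diagonal (fun x : Fin (p + 1) → Fin 2 =>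
        ((deltaEven p (fun j => x j.castSucc) * 2⁻¹ : ℝ) : ℂ)))
      ≤ Ccost p := by
  have hcardfun : (Fintype.card (Fin (p + 1) → Fin 2)) = 2 ^ (p + 1) := by
    simp
  have hTsum : ∀ i, ∑ x, Todd p i x = 1 := by
    intro i
    rcases eq_or_ne i (Fin.last p) with rfl | h
    · have hx : ∀ x : Fin (p + 1) → Fin 2, Todd p (Fin.last p) x = ((2 : ℝ) ^ (p + 1))⁻¹ :=
        fun x => by simp [Todd]
      rw [Finset.sum_congr rfl fun x _ => hx x, Finset.sum_const, Finset.card_univ,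
        hcardfun, nsmul_eq_mul]
      push_cast
      field_simp
    · simp only [Todd, dif_neg h]
      rw [sum_snoc p (fun y _ => Teven p (i.castPred h) y * 2⁻¹)]
      have : ∀ y : Fin p → Fin 2, ∑ _v : Fin 2, Teven p (i.castPred h) y * 2⁻¹
          = Teven p (i.castPred h) y := by
        intro y
        rw [Finset.sum_const, Finset.card_univ, Fintype.card_fin, nsmul_eq_mul]
        ring
      rw [Finset.sum_congr rfl fun y _ => this y, Teven_sum p hp]
  have hHsum : ∀ i, ∑ x, Hodd p i x = 1 := by
    intro i
    rcases eq_or_ne i (Fin.last p) with rfl | h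
    · have hx : ∀ x : Fin (p + 1) → Fin 2, Hodd p (Fin.last p) x = ((2 : ℝ) ^ (p + 1))⁻¹ :=
        fun x => by simp [Hodd]
      rw [Finset.sum_congr rfl fun x _ => hx x, Finset.sum_const, Finset.card_univ,
        hcardfun, nsmul_eq_mul]
      push_cast
      field_simp
    · simp only [Hodd, dif_neg h]
      rw [sum_snoc p (fun y _ => Heven p (i.castPred h) y * 2⁻¹)]
      have : ∀ y : Fin p → Fin 2, ∑ _v : Fin 2, Heven p (i.castPred h) y * 2⁻¹
          = Heven p (i.castPred h) y := by
        intro y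
        rw [Finset.sum_const, Finset.card_univ, Fintype.card_fin, nsmul_eq_mul]
        ring
      rw [Finset.sum_congr rfl fun y _ => this y, Heven_sum p hp]
  have hmarg : ∀ i z, Todd p i (Function.update z i 0) + Todd p i (Function.update z i 1)
      = Hodd p i (Function.update z i 0) + Hodd p i (Function.update z i 1) := by
    intro i z
    rcases eq_or_ne i (Fin.last p) with rfl | h
    · simp [Todd, Hodd]
    · obtain ⟨i₀, rfl⟩ : ∃ i₀ : Fin p, i₀.castSucc = i := by
        refine ⟨i.castPred h, Fin.castSucc_castPred i h⟩
      simp only [Todd, Hodd, dif_neg h, Fin.castPred_castSucc]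
      rw [update_comp z i₀ 0, update_comp z i₀ 1]
      have := marg_even p i₀ (fun j => z j.castSucc)
      ring_nf
      ring_nf at this
      linarith
  have hdec : ∀ x, deltaEven p (fun j => x j.castSucc) * 2⁻¹
      = ∑ i, codd p i * (Todd p i x - Hodd p i x) := by
    intro x
    rw [Fin.sum_univ_castSucc]
    have hlast : codd p (Fin.last p) * (Todd p (Fin.last p) x - Hodd p (Fin.last p) x) = 0 := by
      simp [codd]
    rw [hlast, add_zero]
    have hterm : ∀ i₀ : Fin p,
        codd p i₀.castSucc * (Todd p i₀.castSucc x - Hodd p i₀.castSucc x)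
          = ((Ccost p / p) * (Teven p i₀ (fun j => x j.castSucc)
              - Heven p i₀ (fun j => x j.castSucc))) * 2⁻¹ := by
      intro i₀
      have h := castSucc_ne_last i₀
      simp only [codd, Todd, Hodd, if_neg h, dif_neg h, Fin.castPred_castSucc]
      ring
    rw [Finset.sum_congr rfl fun i₀ _ => hterm i₀, ← Finset.sum_mul,
      ← dec_even p hp (fun j => x j.castSucc)]
  have hc : ∀ i, 0 ≤ codd p i := by
    intro i
    unfold codd
    split_ifs
    · exact le_refl 0
    · exact div_nonneg (Ccost_pos p hp).le (Nat.cast_nonneg p)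
  have hT0 : ∀ i x, 0 ≤ Todd p i x := by
    intro i x
    unfold Todd
    split_ifs with h
    · positivity
    · exact mul_nonneg (Teven_nonneg p hp _ _) (by norm_num)
  have hH0 : ∀ i x, 0 ≤ Hodd p i x := by
    intro i x
    unfold Hodd
    split_ifs with h
    · positivity
    · exact mul_nonneg (Heven_nonneg p hp _ _) (by norm_num)
  calc W1 (Matrix.diagonal (fun x : Fin (p + 1) → Fin 2 =>
        ((deltaEven p (fun j => x j.castSucc) * 2⁻¹ : ℝ) : ℂ)))
      ≤ ∑ i, codd p i :=
        W1_le_of_scalarData (fun x => deltaEven p (fun j => x j.castSucc) * 2⁻¹)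
          (codd p) (Todd p) (Hodd p) hc hT0 hH0 hTsum hHsum hmarg (fun x => hdec x)
    _ = Ccost p := by
        rw [Fin.sum_univ_castSucc]
        have h1 : ∀ i₀ : Fin p, codd p i₀.castSucc = Ccost p / p := fun i₀ =>
          if_neg (castSucc_ne_last i₀)
        have h2 : codd p (Fin.last p) = 0 := if_pos rfl
        rw [Finset.sum_congr rfl fun i₀ _ => h1 i₀, h2, add_zero, sum_c_even p hp]


lemma xi_odd_eq (p : ℕ) (hpe : Even p) :
    xi (p + 1) = Matrix.diagonal (fun a : Fin (p + 1) → Fin 2 =>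
      (if 2 * (∑ j : Fin p, ((a j.castSucc : ℕ))) = p then ((p.choose (p / 2) : ℂ))⁻¹ else 0) * 2⁻¹) := by
  have hne : ¬ Even (p + 1) := by simp [Nat.even_add_one, hpe]
  have hxi : xi (p + 1) = fun a b =>
      xiEven p (fun i => a i.castSucc) (fun i => b i.castSucc) *
        ((2 : ℂ))⁻¹ * (if a (Fin.last p) = b (Fin.last p) then 1 else 0) := by
    simp only [xi]; exact if_neg hne
  rw [hxi]
  ext a b
  by_cases hab : a = b
  · subst hab
    rw [Matrix.diagonal_apply_eq]
    unfold xiEven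
    rw [Matrix.diagonal_apply_eq, if_pos rfl, mul_one]
  · rw [Matrix.diagonal_apply_ne _ hab]
    by_cases hl : a (Fin.last p) = b (Fin.last p)
    · have hcs : (fun j : Fin p => a j.castSucc) ≠ (fun j : Fin p => b j.castSucc) := by
        intro hcon
        apply hab
        funext j
        refine Fin.lastCases hl (fun j' => ?_) j
        exact congrFun hcon j'
      unfold xiEven
      rw [Matrix.diagonal_apply_ne _ hcs, zero_mul, zero_mul]
    · rw [if_neg hl, mul_zero]

lemma odd_matrix_eq (p : ℕ) (hp : 2 ≤ p) (hpe : Even p) :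
    xi (p + 1) - iidOn (Fin (p + 1)) (((2 : ℂ))⁻¹ • (1 : Matrix (Fin 2) (Fin 2) ℂ))
      = Matrix.diagonal (fun x : Fin (p + 1) → Fin 2 =>
          ((deltaEven p (fun j => x j.castSucc) * 2⁻¹ : ℝ) : ℂ)) := by
  rw [xi_odd_eq p hpe, iid_eq (p + 1), Matrix.diagonal_sub]
  refine congrArg Matrix.diagonal (funext fun x => ?_)
  have hiff : (2 * (∑ j : Fin p, ((x j.castSucc : ℕ))) = p) ↔ (wtF (fun j => x j.castSucc) = p / 2) := by
    have hr : wtF (fun j => x j.castSucc) = ∑ j : Fin p, ((x j.castSucc : ℕ)) := rfl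
    rw [hr]
    obtain ⟨q, hq⟩ := hpe
    omega
  unfold deltaEven
  split_ifs with h1 h2 h2
  · push_cast; ring
  · exact absurd (hiff.mp h1) h2
  · exact absurd (hiff.mpr h2) h1
  · push_cast; ring



lemma odd_W1_bound (p : ℕ) (hp : 2 ≤ p) (hpe : Even p) :
    W1 (xi (p + 1) - iidOn (Fin (p + 1)) (((2 : ℂ))⁻¹ • (1 : Matrix (Fin 2) (Fin 2) ℂ)))
      ≤ Real.sqrt p / 2 := by
  rw [odd_matrix_eq p hp hpe]
  exact (odd_data_bound p hp hpe).trans (Ccost_le p hp hpe)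

/-- For every even `n`, `(1/n)‖ξₙ − τ^{⊗n}‖_{W1} ≤ √(ln(n+1)/(2n))`,
and `(ξₙ)ₙ` is a Wasserstein almost i.i.d. source along `τ = 𝟙₂/2`. -/
theorem xi_is_Wasserstein_almost_iid :
    (∀ n : ℕ, 2 ≤ n → Even n →
      (1 / (n : ℝ)) *
          W1 (xi n - iidOn (Fin n) (((2 : ℂ))⁻¹ • (1 : Matrix (Fin 2) (Fin 2) ℂ)))
        ≤ Real.sqrt (Real.log ((n : ℝ) + 1) / (2 * n))) ∧
    Filter.Tendsto
      (fun n : ℕ => (1 / (n : ℝ)) *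
        W1 (xi n - iidOn (Fin n) (((2 : ℂ))⁻¹ • (1 : Matrix (Fin 2) (Fin 2) ℂ))))
      Filter.atTop (nhds 0) := by

  have hlog : ∀ n : ℕ, 2 ≤ n → (1 : ℝ) / 2 ≤ Real.log ((n : ℝ) + 1) := by
    intro n hn
    have h3 : (3 : ℝ) ≤ (n : ℝ) + 1 := by
      have : (2 : ℝ) ≤ (n : ℝ) := by exact_mod_cast hn
      linarith
    have hl : Real.log 3 ≤ Real.log ((n : ℝ) + 1) := Real.log_le_log (by norm_num) h3
    have hl3 : (1 : ℝ) ≤ Real.log 3 := by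
      rw [Real.le_log_iff_exp_le (by norm_num)]
      exact le_of_lt (lt_of_lt_of_le Real.exp_one_lt_d9 (by norm_num))
    linarith
  constructor
  · intro n hn he
    have hb := even_W1_bound n hn he
    have hn0 : (0 : ℝ) < n := by exact_mod_cast (by omega : 0 < n)
    have step1 : (1 / (n : ℝ)) *
        W1 (xi n - iidOn (Fin n) (((2 : ℂ))⁻¹ • (1 : Matrix (Fin 2) (Fin 2) ℂ)))
        ≤ (1 / (n : ℝ)) * (Real.sqrt n / 2) :=
      mul_le_mul_of_nonneg_left hb (by positivity)
    refine le_trans step1 ?_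
    rw [show (1 / (n : ℝ)) * (Real.sqrt n / 2) = Real.sqrt n / (2 * n) by ring]
    have hlogpos : (0 : ℝ) ≤ Real.log ((n : ℝ) + 1) / (2 * n) :=
      div_nonneg (by linarith [hlog n hn]) (by positivity)
    rw [Real.le_sqrt (by positivity) hlogpos]
    rw [div_pow, Real.sq_sqrt hn0.le]
    rw [div_le_div_iff₀ (by positivity) (by positivity)]
    have := hlog n hn
    nlinarith [hn0]
  · have h1 : Tendsto (fun n : ℕ => (n : ℝ) - 1) atTop atTop := by
      have := tendsto_atTop_add_const_right atTop (-1 : ℝ)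
        (tendsto_natCast_atTop_atTop (R := ℝ))
      simpa [sub_eq_add_neg] using this
    have h3 : Tendsto (fun n : ℕ => (Real.sqrt ((n : ℝ) - 1))⁻¹) atTop (nhds 0) := by
      have hc : Tendsto Real.sqrt (nhds 0) (nhds 0) := by
        have := Real.continuous_sqrt.tendsto 0
        simpa using this
      have h4 : Tendsto (fun n : ℕ => Real.sqrt (((n : ℝ) - 1)⁻¹)) atTop (nhds 0) :=
        hc.comp h1.inv_tendsto_atTop
      have heq : (fun n : ℕ => Real.sqrt (((n : ℝ) - 1)⁻¹))
          = fun n : ℕ => (Real.sqrt ((n : ℝ) - 1))⁻¹ := by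
        funext n; rw [Real.sqrt_inv]
      rwa [heq] at h4
    refine tendsto_of_tendsto_of_tendsto_of_le_of_le' tendsto_const_nhds h3 ?_ ?_
    · filter_upwards with n
      exact mul_nonneg (by positivity) (W1_nonneg _)
    · filter_upwards [eventually_ge_atTop 2] with n hn
      have hn0 : (0 : ℝ) < n := by exact_mod_cast (by omega : 0 < n)
      have hn1 : (0 : ℝ) < (n : ℝ) - 1 := by
        have : (2 : ℝ) ≤ (n : ℝ) := by exact_mod_cast hn
        linarith
      have hsq1 : (0 : ℝ) < Real.sqrt ((n : ℝ) - 1) := Real.sqrt_pos.mpr hn1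
      rcases Nat.even_or_odd n with he | ho
      · have hb := even_W1_bound n hn he
        have step1 : (1 / (n : ℝ)) *
            W1 (xi n - iidOn (Fin n) (((2 : ℂ))⁻¹ • (1 : Matrix (Fin 2) (Fin 2) ℂ)))
            ≤ (1 / (n : ℝ)) * (Real.sqrt n / 2) :=
          mul_le_mul_of_nonneg_left hb (by positivity)
        refine le_trans step1 ?_
        rw [show (1 / (n : ℝ)) * (Real.sqrt n / 2) = Real.sqrt n / (2 * n) by ring,
          inv_eq_one_div, div_le_div_iff₀ (by positivity) hsq1]
        have hab : Real.sqrt n * Real.sqrt ((n : ℝ) - 1) ≤ n := by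
          calc Real.sqrt n * Real.sqrt ((n : ℝ) - 1)
              ≤ Real.sqrt n * Real.sqrt n :=
                mul_le_mul_of_nonneg_left (Real.sqrt_le_sqrt (by linarith)) (Real.sqrt_nonneg _)
            _ = n := Real.mul_self_sqrt hn0.le
        linarith
      · obtain ⟨k, hk⟩ := ho
        have hk1 : 1 ≤ k := by omega
        have hpe : Even (2 * k) := ⟨k, by ring⟩
        have hp2 : 2 ≤ 2 * k := by omega
        have hb := odd_W1_bound (2 * k) hp2 hpe
        rw [show 2 * k + 1 = n by omega] at hb
        have hcast : ((2 * k : ℕ) : ℝ) = (n : ℝ) - 1 := by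
          have hnk : (n : ℝ) = 2 * (k : ℝ) + 1 := by rw [hk]; push_cast; ring
          push_cast
          linarith
        rw [hcast] at hb
        have step1 : (1 / (n : ℝ)) *
            W1 (xi n - iidOn (Fin n) (((2 : ℂ))⁻¹ • (1 : Matrix (Fin 2) (Fin 2) ℂ)))
            ≤ (1 / (n : ℝ)) * (Real.sqrt ((n : ℝ) - 1) / 2) :=
          mul_le_mul_of_nonneg_left hb (by positivity)
        refine le_trans step1 ?_
        rw [show (1 / (n : ℝ)) * (Real.sqrt ((n : ℝ) - 1) / 2)
            = Real.sqrt ((n : ℝ) - 1) / (2 * n) by ring,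
          inv_eq_one_div, div_le_div_iff₀ (by positivity) hsq1]
        have hab : Real.sqrt ((n : ℝ) - 1) * Real.sqrt ((n : ℝ) - 1) = (n : ℝ) - 1 :=
          Real.mul_self_sqrt hn1.le
        linarith

end AlmostIID
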